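/- arXiv:1905.10512 — 5 statements merged into one kernel-verified Lean document; each statement's English description precedes it below -/
import Mathlib

section
/- Any nilpotent permutation group of degree n has order at most 2^(n-1). -/
/-!
For a faithful action of a nilpotent group `G` on a finite set `α` we prove
`|G| ≤ 2 ^ (|α| - #orbits)` by induction on `|α| + |G|`. If `G` is intransitive, it embeds in
the product of its images on an orbit and on the complement of that orbit. If `G` is transitive,
its centre `Z` is nontrivial. When `Z` is transitive too, `g ↦ g • a` is injective, so
`|G| ≤ |α|`. Otherwise the `Z`-orbits form a `G`-invariant partition into `b < |α|` blocks;
`|G| = |H| |K|` for the image `H` of `G` on the blocks and its kernel `K`, and since `K` has at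
least `b` orbits, induction gives `|G| ≤ 2 ^ (b - 1) * 2 ^ (|α| - b)`.
-/

open MulAction Subgroup

namespace MulAction

variable {G α : Type*} [Group G] [MulAction G α]

theorem card_orbitRel_quotient_le_card (β : Type*) [MulAction G β] [Finite β] :
    Nat.card (orbitRel.Quotient G β) ≤ Nat.card β :=
  Nat.card_le_card_of_surjective _ Quotient.mk''_surjective

theorem card_orbitRel_quotient_range_toPermHom (β : Type*) [MulAction G β] :
    Nat.card (orbitRel.Quotient (toPermHom G β).range β) = Nat.card (orbitRel.Quotient G β) :=
  Nat.card_congr <| Quotient.congrRight fun a b ↦ by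
    simp only [orbitRel_apply, mem_orbit_iff]
    constructor
    · rintro ⟨⟨_, g, rfl⟩, rfl⟩
      exact ⟨g, rfl⟩
    · rintro ⟨g, rfl⟩
      exact ⟨⟨toPermHom G β g, g, rfl⟩, rfl⟩

def orbitSubMulAction (a : α) : SubMulAction G α where
  carrier := orbit G a
  smul_mem' g _ hb := mem_orbit_of_mem_orbit g hb

theorem card_le_card_range_toPermHom_mul_compl [Finite α] [FaithfulSMul G α]
    (p : SubMulAction G α) :
    Nat.card G ≤ Nat.card (toPermHom G p).range * Nat.card (toPermHom G ↥pᶜ).range := by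
  rw [← Nat.card_prod]
  refine Nat.card_le_card_of_injective
    (fun g ↦ ((toPermHom G p).rangeRestrict g, (toPermHom G ↥pᶜ).rangeRestrict g)) ?_
  intro g h hgh
  refine FaithfulSMul.eq_of_smul_eq_smul (α := α) fun a ↦ ?_
  by_cases ha : a ∈ p
  · exact congrArg (fun x ↦ ((x.1 : Equiv.Perm p) ⟨a, ha⟩ : α)) hgh
  · exact congrArg (fun x ↦ ((x.2 : Equiv.Perm ↥pᶜ) ⟨a, ha⟩ : α)) hgh

theorem card_orbitRel_quotient_le_add_compl [Finite α] (p : SubMulAction G α) :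
    Nat.card (orbitRel.Quotient G α) ≤
      Nat.card (orbitRel.Quotient G p) + Nat.card (orbitRel.Quotient G ↥pᶜ) := by
  rw [← Nat.card_sum]
  refine Nat.card_le_card_of_surjective
    (Sum.elim (Quotient.map' Subtype.val fun _ _ ⟨g, hg⟩ ↦ ⟨g, congrArg Subtype.val hg⟩)
      (Quotient.map' Subtype.val fun _ _ ⟨g, hg⟩ ↦ ⟨g, congrArg Subtype.val hg⟩)) ?_
  rintro ⟨a⟩
  by_cases ha : a ∈ p
  · exact ⟨.inl ⟦⟨a, ha⟩⟧, rfl⟩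
  · exact ⟨.inr ⟦⟨a, ha⟩⟧, rfl⟩

theorem card_le_two_pow_of_compl [Finite α] [FaithfulSMul G α] (p : SubMulAction G α)
    (hp : Nat.card (toPermHom G p).range ≤ 2 ^ (Nat.card p - Nat.card (orbitRel.Quotient G p)))
    (hpc : Nat.card (toPermHom G ↥pᶜ).range ≤
      2 ^ (Nat.card ↥pᶜ - Nat.card (orbitRel.Quotient G ↥pᶜ))) :
    Nat.card G ≤ 2 ^ (Nat.card α - Nat.card (orbitRel.Quotient G α)) := by
  classical
  have hcard : Nat.card p + Nat.card ↥pᶜ = Nat.card α := by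
    rw [← Nat.card_sum]
    exact Nat.card_congr (Equiv.sumCompl (· ∈ p))
  have horb := card_orbitRel_quotient_le_add_compl p
  have hp_orb := card_orbitRel_quotient_le_card (G := G) p
  have hpc_orb := card_orbitRel_quotient_le_card (G := G) ↥pᶜ
  calc Nat.card G ≤ Nat.card (toPermHom G p).range * Nat.card (toPermHom G ↥pᶜ).range :=
        card_le_card_range_toPermHom_mul_compl p
    _ ≤ 2 ^ (Nat.card p - Nat.card (orbitRel.Quotient G p)) *
        2 ^ (Nat.card ↥pᶜ - Nat.card (orbitRel.Quotient G ↥pᶜ)) := Nat.mul_le_mul hp hpc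
    _ ≤ 2 ^ (Nat.card α - Nat.card (orbitRel.Quotient G α)) := by
      rw [← pow_add]
      exact Nat.pow_le_pow_right two_pos (by omega)

theorem card_le_of_isPretransitive_center [Finite α] [Nonempty α] [FaithfulSMul G α]
    [IsPretransitive (center G) α] : Nat.card G ≤ Nat.card α := by
  obtain ⟨a⟩ := ‹Nonempty α›
  refine Nat.card_le_card_of_injective (· • a) fun g h hgh ↦ ?_
  refine FaithfulSMul.eq_of_smul_eq_smul (α := α) fun b ↦ ?_
  obtain ⟨z, rfl⟩ := exists_smul_eq (center G) a b
  have hcomm (k : G) : k • (z : G) • a = (z : G) • k • a := by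
    rw [smul_smul, mem_center_iff.mp z.2 k, mul_smul]
  change g • (z : G) • a = h • (z : G) • a
  rw [hcomm, hcomm, show g • a = h • a from hgh]

section Normal

variable (N : Subgroup G) [N.Normal]

instance : MulAction G (orbitRel.Quotient N α) where
  smul g := Quotient.map' (g • ·) fun _ b ⟨n, hn⟩ ↦
    ⟨⟨g * n * g⁻¹, ‹N.Normal›.conj_mem n n.2 g⟩, by
      rw [← hn]
      change (g * n * g⁻¹) • g • b = g • (n : G) • b
      rw [smul_smul, inv_mul_cancel_right, mul_smul]⟩
  one_smul q := Quotient.inductionOn' q fun a ↦ congrArg Quotient.mk'' (one_smul G a)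
  mul_smul g h q := Quotient.inductionOn' q fun a ↦ congrArg Quotient.mk'' (mul_smul g h a)

theorem card_orbitRel_quotient_le_card_orbitRel_quotient_orbitRel_quotient [Finite α] :
    Nat.card (orbitRel.Quotient G α) ≤
      Nat.card (orbitRel.Quotient G (orbitRel.Quotient N α)) := by
  refine Nat.card_le_card_of_injective
    (Quotient.map' (Quotient.mk'' : α → orbitRel.Quotient N α) fun _ _ ⟨g, hg⟩ ↦
      ⟨g, by rw [← hg]; rfl⟩) ?_
  rintro ⟨a⟩ ⟨b⟩ hab
  obtain ⟨g, hg⟩ := Quotient.exact' hab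
  obtain ⟨n, hn⟩ := Quotient.exact' (hg : Quotient.mk'' (g • b) = Quotient.mk'' a)
  refine Quotient.sound' ⟨(n : G)⁻¹ * g, ?_⟩
  change ((n : G)⁻¹ * g) • b = a
  have hn' : (n : G) • a = g • b := hn
  rw [mul_smul, ← hn', inv_smul_smul]

theorem card_orbitRel_quotient_le_card_orbitRel_quotient_ker [Finite α] :
    Nat.card (orbitRel.Quotient N α) ≤
      Nat.card (orbitRel.Quotient (toPermHom G (orbitRel.Quotient N α)).ker α) := by
  refine Nat.card_le_card_of_surjective
    (Quotient.map' id fun a b ⟨k, hk⟩ ↦ Quotient.exact' ?_) ?_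
  · rw [← hk]
    exact Equiv.congr_fun k.2 (Quotient.mk'' b)
  · rintro ⟨a⟩
    exact ⟨⟦a⟧, rfl⟩

theorem ker_toPermHom_orbitRel_quotient_ne_top [IsPretransitive G α]
    (hN : ¬IsPretransitive N α) : (toPermHom G (orbitRel.Quotient N α)).ker ≠ ⊤ := by
  obtain ⟨a, b, hab⟩ : ∃ a b : α, ∀ n : N, n • a ≠ b := by
    contrapose! hN
    exact ⟨hN⟩
  obtain ⟨g, rfl⟩ := exists_smul_eq G a b
  intro hker
  have hg : g ∈ (toPermHom G (orbitRel.Quotient N α)).ker := hker ▸ mem_top g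
  obtain ⟨n, hn⟩ := Quotient.exact' (Equiv.congr_fun hg (Quotient.mk'' a))
  exact hab n hn

end Normal

theorem card_orbitRel_quotient_lt_card [Finite α] [FaithfulSMul G α] {N : Subgroup G}
    (hN : N ≠ ⊥) :
    Nat.card (orbitRel.Quotient N α) < Nat.card α := by
  obtain ⟨n, hnN, hn1⟩ := N.bot_or_exists_ne_one.resolve_left hN
  obtain ⟨a, ha⟩ : ∃ a : α, n • a ≠ a := by
    by_contra! h
    exact hn1 (FaithfulSMul.eq_of_smul_eq_smul (α := α) fun a ↦ by rw [h, one_smul])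
  have hsurj : Function.Surjective (Quotient.mk'' : α → orbitRel.Quotient N α) :=
    Quotient.mk''_surjective
  refine (Nat.card_le_card_of_surjective _ hsurj).lt_of_ne fun hcard ↦ ha ?_
  refine ((Nat.bijective_iff_surjective_and_card _).mpr ⟨hsurj, hcard.symm⟩).1 ?_
  exact Quotient.sound' ⟨⟨n, hnN⟩, rfl⟩

theorem card_le_two_pow_of_normal [Finite α] (N : Subgroup G) [N.Normal]
    (hH : Nat.card (toPermHom G (orbitRel.Quotient N α)).range ≤
      2 ^ (Nat.card (orbitRel.Quotient N α) -
        Nat.card (orbitRel.Quotient G (orbitRel.Quotient N α))))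
    (hK : Nat.card (toPermHom G (orbitRel.Quotient N α)).ker ≤
      2 ^ (Nat.card α -
        Nat.card (orbitRel.Quotient (toPermHom G (orbitRel.Quotient N α)).ker α))) :
    Nat.card G ≤ 2 ^ (Nat.card α - Nat.card (orbitRel.Quotient G α)) := by
  have hblocks := card_orbitRel_quotient_le_card_orbitRel_quotient_ker (α := α) N
  have horb := card_orbitRel_quotient_le_card_orbitRel_quotient_orbitRel_quotient (α := α) N
  have hB_orb := card_orbitRel_quotient_le_card (G := G) (orbitRel.Quotient N α)
  set φ := toPermHom G (orbitRel.Quotient N α)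
  have hK_orb := card_orbitRel_quotient_le_card (G := φ.ker) α
  calc Nat.card G = Nat.card φ.ker * Nat.card φ.range := by
        rw [← φ.ker.card_mul_index, Subgroup.index_ker]
    _ ≤ 2 ^ (Nat.card α - Nat.card (orbitRel.Quotient φ.ker α)) *
        2 ^ (Nat.card (orbitRel.Quotient N α) -
          Nat.card (orbitRel.Quotient G (orbitRel.Quotient N α))) := Nat.mul_le_mul hK hH
    _ ≤ 2 ^ (Nat.card α - Nat.card (orbitRel.Quotient G α)) := by
      rw [← pow_add]
      exact Nat.pow_le_pow_right two_pos (by omega)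

end MulAction

universe u

theorem Group.IsNilpotent.card_le_two_pow_card_sub_card_orbitRel_quotient {G α : Type u}
    [Group G] [Group.IsNilpotent G] [MulAction G α] [FaithfulSMul G α] [Finite α] :
    Nat.card G ≤ 2 ^ (Nat.card α - Nat.card (orbitRel.Quotient G α)) := by
  induction hm : Nat.card α + Nat.card G using Nat.strong_induction_on generalizing G α with
  | _ m IH =>
  subst hm
  have : Finite G := Finite.of_injective _ (toPerm_injective (α := G) (β := α))
  have ih_range (β : Type u) [MulAction G β] [Finite β] (hβ : Nat.card β < Nat.card α) :
      Nat.card (toPermHom G β).range ≤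
        2 ^ (Nat.card β - Nat.card (orbitRel.Quotient G β)) := by
    have := nilpotent_of_surjective _ (toPermHom G β).rangeRestrict_surjective
    have := Nat.card_le_card_of_surjective _ (toPermHom G β).rangeRestrict_surjective
    rw [← card_orbitRel_quotient_range_toPermHom]
    exact IH _ (by omega) rfl
  have ih_subgroup (K : Subgroup G) (hK : K ≠ ⊤) :
      Nat.card K ≤ 2 ^ (Nat.card α - Nat.card (orbitRel.Quotient K α)) := by
    have := K.card_le_card_group
    have := (card_eq_iff_eq_top K).not.mpr hK
    exact IH _ (by omega) rfl
  rcases subsingleton_or_nontrivial G with hG | hG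
  · rw [Nat.card_of_subsingleton (1 : G)]
    exact Nat.one_le_two_pow
  by_cases htrans : IsPretransitive G α
  swap
  · obtain ⟨a, b, hab⟩ : ∃ a b : α, b ∉ orbit G a := by
      contrapose! htrans
      exact ⟨htrans⟩
    let p : SubMulAction G α := orbitSubMulAction a
    refine card_le_two_pow_of_compl p (ih_range p ?_) (ih_range ↥pᶜ ?_)
    · exact Finite.card_subtype_lt (p := (· ∈ p)) hab
    · exact Finite.card_subtype_lt (p := (· ∈ pᶜ)) (not_not.mpr (mem_orbit_self a))
  have horb : Nat.card (orbitRel.Quotient G α) ≤ 1 :=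
    Finite.card_le_one_iff_subsingleton.mpr <|
      (pretransitive_iff_subsingleton_quotient G α).mp htrans
  by_cases hcenter : IsPretransitive (center G) α
  · have : Nonempty α := by
      obtain ⟨g, hg⟩ := exists_ne (1 : G)
      by_contra! hα
      exact hg (FaithfulSMul.eq_of_smul_eq_smul (α := α) fun a ↦ isEmptyElim a)
    have := Nat.lt_two_pow_self (n := Nat.card α - Nat.card (orbitRel.Quotient G α))
    have := card_le_of_isPretransitive_center (G := G) (α := α)
    omega
  · exact card_le_two_pow_of_normal (center G)
      (ih_range _ (card_orbitRel_quotient_lt_card (Group.IsNilpotent.center_ne_bot G)))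
      (ih_subgroup _ (ker_toPermHom_orbitRel_quotient_ne_top _ hcenter))

theorem nilpotent_perm_group_card_le_two_pow_general (n : ℕ)
    (G : Subgroup (Equiv.Perm (Fin n))) (hnil : Group.IsNilpotent G) :
    Nat.card G ≤ 2 ^ (n - 1) := by
  have hbound := Group.IsNilpotent.card_le_two_pow_card_sub_card_orbitRel_quotient
    (G := G) (α := Fin n)
  rw [Nat.card_fin] at hbound
  refine hbound.trans (Nat.pow_le_pow_right two_pos ?_)
  cases n with
  | zero => omega
  | succ m =>
    have : Nonempty (orbitRel.Quotient G (Fin (m + 1))) := ⟨Quotient.mk'' 0⟩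
    have : 0 < Nat.card (orbitRel.Quotient G (Fin (m + 1))) := Nat.card_pos
    omega

/-- Any nilpotent permutation group of degree `n` has order at most `2^(n-1)`. -/
theorem nilpotent_perm_group_card_le_two_pow (n : ℕ) (hn : 1 ≤ n)
    (G : Subgroup (Equiv.Perm (Fin n))) (hnil : Group.IsNilpotent G) :
    Nat.card G ≤ 2 ^ (n - 1) :=
  nilpotent_perm_group_card_le_two_pow_general n G hnil
end

section
/- Let G = H ≀ S be the wreath product of a nontrivial finite group H with a permutation group S of degree n. If every abelian subgroup of H has order at most a (with a ≥ 2), then every abelian subgroup of G has order at most a^n. -/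
/-!
Let `π : A → Sym(n)` forget the base coordinates and split `|A| = |ker π| · |π A|`. The abelian
permutation group `π A` acts regularly on each of its orbits `O₁, …, Oₖ`, so it embeds in
`O₁ × ⋯ × Oₖ`. An element `x` of `ker π` commuting with `g ∈ A` has conjugate coordinates at
`i` and `π g i`, so `x` is determined by its coordinates at one representative of each orbit;
these coordinates range over abelian subgroups of `H`, whence `|ker π| ≤ aᵏ`. Finally
`aᵏ ∏ |Oⱼ| = ∏ a |Oⱼ| ≤ ∏ a ^ |Oⱼ| = aⁿ`.
-/

/-- The automorphism of `Fin n → H` induced by a permutation of coordinates. -/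
def permCoordAut (H : Type*) [Group H] {n : ℕ} (σ : Equiv.Perm (Fin n)) :
    MulAut (Fin n → H) where
  toFun f := f ∘ σ.symm
  invFun f := f ∘ σ
  left_inv f := by funext x; simp
  right_inv f := by funext x; simp
  map_mul' f g := rfl

/-- The action of a permutation group `S ≤ Sym(n)` on `Fin n → H` by permuting coordinates,
used to form the wreath product `H ≀ S` as a semidirect product. -/
def wreathAction (H : Type*) [Group H] {n : ℕ} (S : Subgroup (Equiv.Perm (Fin n))) :
    S →* MulAut (Fin n → H) :=
  MonoidHom.mk' (fun σ => permCoordAut H (σ : Equiv.Perm (Fin n)))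
    (by intro a b; rfl)


open MulAction

theorem pow_card_mul_prod_le_pow_sum {ι : Type*} [Fintype ι] (m : ι → ℕ) {a : ℕ} (ha : a ≠ 1) :
    a ^ Fintype.card ι * ∏ i, m i ≤ a ^ ∑ i, m i := by
  rw [← Finset.prod_pow_eq_pow_sum, ← Finset.card_univ, ← Finset.prod_const,
    ← Finset.prod_mul_distrib]
  exact Finset.prod_le_prod' fun i _ => Nat.mul_le_pow ha (m i)

theorem MulAction.smul_eq_self_of_mem_orbit {G X : Type*} [Group G] [IsMulCommutative G]
    [MulAction G X] {g : G} {x y : X} (hy : y ∈ orbit G x) (hx : g • x = x) : g • y = y := by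
  obtain ⟨k, rfl⟩ := hy
  rw [smul_smul, mul_comm', mul_smul, hx]

theorem MulAction.injective_smul_orbitRel_out {G X : Type*} [Group G] [IsMulCommutative G]
    [MulAction G X] [FaithfulSMul G X] :
    Function.Injective fun (g : G) (q : orbitRel.Quotient G X) => g • q.out := by
  intro g h hgh
  have hq (q : orbitRel.Quotient G X) : g • q.out = h • q.out := congrFun hgh q
  rw [← inv_mul_eq_one]
  refine eq_of_smul_eq_smul (α := X) fun x => ?_
  rw [one_smul]
  refine smul_eq_self_of_mem_orbit (mem_orbit_symm.1 (Quotient.mk_out (s := orbitRel G X) x)) ?_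
  rw [mul_smul, ← hq, inv_smul_smul]

theorem MulAction.card_le_card_pi_orbit (G X : Type*) [Group G] [IsMulCommutative G]
    [MulAction G X] [FaithfulSMul G X] [Finite X] :
    Nat.card G ≤ Nat.card (∀ q : orbitRel.Quotient G X, orbit G q.out) :=
  Nat.card_le_card_of_injective (fun g q => ⟨g • q.out, mem_orbit _ _⟩) fun _ _ h =>
    injective_smul_orbitRel_out <| funext fun q => congrArg Subtype.val (congrFun h q)

theorem MonoidHom.card_le_pow_of_forall_eq_one {G H ι : Type*} [Group G] [Group H] [Finite H]
    [Fintype ι] (e : ι → G →* H) (he : ∀ x, (∀ i, e i x = 1) → x = 1) {a : ℕ}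
    (ha : ∀ i, Nat.card (e i).range ≤ a) : Nat.card G ≤ a ^ Fintype.card ι := by
  have hinj : Function.Injective fun x i => (⟨e i x, x, rfl⟩ : (e i).range) := by
    intro x y hxy
    rw [← inv_mul_eq_one]
    exact he _ fun i => by
      rw [map_mul, map_inv, inv_mul_eq_one]
      exact congrArg Subtype.val (congrFun hxy i)
  calc Nat.card G ≤ Nat.card (∀ i, (e i).range) := Nat.card_le_card_of_injective _ hinj
    _ = ∏ i, Nat.card (e i).range := Nat.card_pi
    _ ≤ ∏ _i : ι, a := Finset.prod_le_prod' fun i _ => ha i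
    _ = a ^ Fintype.card ι := by rw [Finset.prod_const, Finset.card_univ]

namespace Wreath

variable {H : Type*} [Group H] {n : ℕ} {S : Subgroup (Equiv.Perm (Fin n))}

theorem isConj_left_apply {x g : (Fin n → H) ⋊[wreathAction H S] S} (hx : x.right = 1)
    (hxg : g * x = x * g) (i : Fin n) :
    IsConj (x.left i) (x.left ((g.right : Equiv.Perm (Fin n)) i)) := by
  have h := congrFun (congrArg SemidirectProduct.left hxg) ((g.right : Equiv.Perm (Fin n)) i)
  simp only [SemidirectProduct.mul_left, hx, map_one, MulAut.one_apply, Pi.mul_apply] at h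
  refine isConj_iff.2 ⟨g.left ((g.right : Equiv.Perm (Fin n)) i), ?_⟩
  rw [mul_inv_eq_iff_eq_mul, ← h]
  simp [wreathAction, permCoordAut]

variable (H S) in
def permHom : (Fin n → H) ⋊[wreathAction H S] S →* Equiv.Perm (Fin n) :=
  S.subtype.comp SemidirectProduct.rightHom

theorem right_eq_one_of_mem_ker {A : Subgroup ((Fin n → H) ⋊[wreathAction H S] S)}
    (x : ((permHom H S).comp A.subtype).ker) : (x : A).1.right = 1 :=
  Subtype.ext x.2

def baseEval (A : Subgroup ((Fin n → H) ⋊[wreathAction H S] S)) (i : Fin n) :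
    ((permHom H S).comp A.subtype).ker →* H where
  toFun x := (x : A).1.left i
  map_one' := rfl
  map_mul' x y := by
    change ((x : A).1 * (y : A).1).left i = _
    rw [SemidirectProduct.mul_left, right_eq_one_of_mem_ker x, map_one]
    rfl

theorem eq_one_of_forall_baseEval_eq_one {A : Subgroup ((Fin n → H) ⋊[wreathAction H S] S)}
    [IsMulCommutative A] {x : ((permHom H S).comp A.subtype).ker}
    (hx : ∀ q : orbitRel.Quotient ((permHom H S).comp A.subtype).range (Fin n),
      baseEval A q.out x = 1) : x = 1 := by
  set T := ((permHom H S).comp A.subtype).range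
  have hleft (i : Fin n) : (x : A).1.left i = 1 := by
    obtain ⟨⟨_, g, rfl⟩, hg⟩ := Quotient.mk_out (s := orbitRel T (Fin n)) i
    have hconj := isConj_left_apply (right_eq_one_of_mem_ker x)
      (congrArg Subtype.val (mul_comm' g (x : A))) i
    rwa [show (g.1.right : Equiv.Perm (Fin n)) i = _ from hg,
      show (x : A).1.left _ = 1 from hx ⟦i⟧, isConj_one_left] at hconj
  exact Subtype.ext <| Subtype.ext <|
    SemidirectProduct.ext (funext hleft) (right_eq_one_of_mem_ker x)

end Wreath

theorem abelian_subgroup_wreath_card_le_general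
    (H : Type*) [Group H] [Finite H]
    (n : ℕ) (S : Subgroup (Equiv.Perm (Fin n)))
    (a : ℕ) (ha : 2 ≤ a)
    (hH : ∀ B : Subgroup H, (∀ x ∈ B, ∀ y ∈ B, x * y = y * x) → Nat.card B ≤ a)
    (A : Subgroup (SemidirectProduct (Fin n → H) S (wreathAction H S)))
    (hA : ∀ x ∈ A, ∀ y ∈ A, x * y = y * x) :
    Nat.card A ≤ a ^ n := by
  have : IsMulCommutative A := isMulCommutative_iff_of_setLike.2 hA
  set π := (Wreath.permHom H S).comp A.subtype
  set Q := orbitRel.Quotient π.range (Fin n)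
  have : Fintype Q := Fintype.ofFinite Q
  have hker : Nat.card π.ker ≤ a ^ Fintype.card Q :=
    MonoidHom.card_le_pow_of_forall_eq_one (fun q => Wreath.baseEval A q.out)
      (fun _ => Wreath.eq_one_of_forall_baseEval_eq_one)
      fun _ => hH _ (isMulCommutative_iff_of_setLike.1 inferInstance)
  have hrange : Nat.card π.range ≤ ∏ q : Q, Nat.card (orbit π.range q.out) :=
    (card_le_card_pi_orbit _ _).trans_eq Nat.card_pi
  have hsum : ∑ q : Q, Nat.card (orbit π.range q.out) = n := by
    rw [← Nat.card_sigma, ← Nat.card_congr (selfEquivSigmaOrbits π.range (Fin n)), Nat.card_fin]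
  calc Nat.card A = Nat.card π.ker * Nat.card π.range := by
        rw [← Subgroup.index_ker, Subgroup.card_mul_index]
    _ ≤ a ^ Fintype.card Q * ∏ q : Q, Nat.card (orbit π.range q.out) :=
        Nat.mul_le_mul hker hrange
    _ ≤ a ^ n := (pow_card_mul_prod_le_pow_sum _ (by omega)).trans_eq (by rw [hsum])

/-- If every abelian subgroup of the nontrivial finite group `H` has order at most `a` (with
`a ≥ 2`), then every abelian subgroup of the wreath product `H ≀ S`, for `S` a permutation
group of degree `n`, has order at most `a^n`. -/
theorem abelian_subgroup_wreath_card_le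
    (H : Type*) [Group H] [Finite H] [Nontrivial H]
    (n : ℕ) (S : Subgroup (Equiv.Perm (Fin n)))
    (a : ℕ) (ha : 2 ≤ a)
    (hH : ∀ B : Subgroup H, (∀ x ∈ B, ∀ y ∈ B, x * y = y * x) → Nat.card B ≤ a)
    (A : Subgroup (SemidirectProduct (Fin n → H) S (wreathAction H S)))
    (hA : ∀ x ∈ A, ∀ y ∈ A, x * y = y * x) :
    Nat.card A ≤ a ^ n :=
  abelian_subgroup_wreath_card_le_general H n S a ha hH A hA
end

section
/- Every abelian subgroup of the symmetric group Sym(m) has order at most 3^(m/3). -/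
open MulAction

-- n^3 ≤ 3^n for all n
lemma aux_cube_le (n : ℕ) : n ^ 3 ≤ 3 ^ n := by
  induction n with
  | zero => norm_num
  | succ k ih =>
    match k, ih with
    | 0, _ => norm_num
    | 1, _ => norm_num
    | 2, _ => norm_num
    | (j+3), ih =>
      have h : (j+4)^3 ≤ 3 * (j+3)^3 := by nlinarith [sq_nonneg j, j.zero_le]
      calc (j+4)^3 ≤ 3 * (j+3)^3 := h
        _ ≤ 3 * 3 ^ (j+3) := by omega
        _ = 3 ^ (j+4) := by ring

lemma aux_le_rpow (n : ℕ) : (n : ℝ) ≤ (3 : ℝ) ^ ((n : ℝ) / 3) := by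
  have h3 : (0:ℝ) ≤ (3 : ℝ) ^ ((n : ℝ) / 3) := (Real.rpow_nonneg (by norm_num) _)
  rw [← pow_le_pow_iff_left₀ (n.cast_nonneg) h3 (three_ne_zero)]
  have : ((3 : ℝ) ^ ((n : ℝ) / 3)) ^ (3:ℕ) = (3:ℝ) ^ (n:ℕ) := by
    rw [← Real.rpow_natCast ((3:ℝ) ^ ((n : ℝ) / 3)) 3, ← Real.rpow_mul (by norm_num)]
    norm_num [Real.rpow_natCast]
  rw [this]
  calc ((n:ℝ))^(3:ℕ) = ((n^3 : ℕ) : ℝ) := by push_cast; ring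
    _ ≤ ((3^n : ℕ) : ℝ) := by exact_mod_cast aux_cube_le n
    _ = (3:ℝ)^(n:ℕ) := by push_cast; ring

section
variable {G : Type*} [Group G] {α : Type*} [MulAction G α]

lemma aux_fix_all (hc : ∀ g h : G, g * h = h * g) (a : G)
    (hfix : ∀ ω : orbitRel.Quotient G α, a • (Quotient.out ω) = Quotient.out ω)
    (x : α) : a • x = x := by
  set ω : orbitRel.Quotient G α := Quotient.mk'' x
  have hrel : Quotient.out ω ∈ orbit G x := by
    have := Quotient.exact' (Quotient.out_eq ω)
    exact this
  obtain ⟨g, hg⟩ := hrel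
  have h1 := hfix ω
  rw [← hg] at h1
  have h2 : a • (g • x) = g • (a • x) := by
    rw [smul_smul, smul_smul, hc]
  rw [h2] at h1
  exact smul_left_cancel g h1

lemma aux_inj (hc : ∀ g h : G, g * h = h * g)
    [FaithfulSMul G α] :
    Function.Injective (fun (a : G) (ω : orbitRel.Quotient G α) =>
      (⟨a • Quotient.out ω, mem_orbit _ _⟩ : orbit G (Quotient.out ω))) := by
  intro a b hab
  have key : ∀ x : α, (b⁻¹ * a) • x = x := by
    apply aux_fix_all hc
    intro ω
    have := congrFun hab ω
    have h1 : a • Quotient.out ω = b • Quotient.out ω := congrArg Subtype.val this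
    rw [mul_smul, h1, ← mul_smul, inv_mul_cancel, one_smul]
  have : b⁻¹ * a = 1 := by
    apply FaithfulSMul.eq_of_smul_eq_smul (α := α)
    intro x; rw [key x, one_smul]
  have h := eq_of_inv_mul_eq_one this
  exact h.symm

end

/-- Every abelian subgroup of `Sym(m)` has order at most `3^(m/3)`. -/
theorem abelian_subgroup_symm_card_le (m : ℕ) (hm : 1 ≤ m)
    (A : Subgroup (Equiv.Perm (Fin m))) (hA : ∀ x ∈ A, ∀ y ∈ A, x * y = y * x) :
    (Nat.card A : ℝ) ≤ (3 : ℝ) ^ ((m : ℝ) / 3) := by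
  classical
  have hcomm : ∀ g h : A, g * h = h * g := fun g h =>
    Subtype.ext (hA g g.2 h h.2)
  have hfaith : FaithfulSMul A (Fin m) := by
    constructor
    intro a b h
    exact Subtype.ext (Equiv.ext fun x => h x)
  set Ω := orbitRel.Quotient A (Fin m) with hΩ
  have : Fintype Ω := Fintype.ofFinite _
  have hOF : ∀ ω : Ω, Fintype (orbit A (Quotient.out ω)) := fun ω => Fintype.ofFinite _
  have hinj := aux_inj (α := Fin m) hcomm
  have hle : Nat.card A ≤ ∏ ω : Ω, Nat.card (orbit A (Quotient.out ω)) := by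
    rw [← Nat.card_pi]
    exact Nat.card_le_card_of_injective _ hinj
  have hsum : ∑ ω : Ω, Nat.card (orbit A (Quotient.out ω)) = m := by
    have h1 := Nat.card_congr (selfEquivSigmaOrbits A (Fin m))
    rw [Nat.card_eq_fintype_card, Nat.card_eq_fintype_card, Fintype.card_fin,
      Fintype.card_sigma] at h1
    simp only [Nat.card_eq_fintype_card]
    exact h1.symm
  calc (Nat.card A : ℝ) ≤ ∏ ω : Ω, (Nat.card (orbit A (Quotient.out ω)) : ℝ) := by
        rw [← Nat.cast_prod]; exact_mod_cast hle
    _ ≤ ∏ ω : Ω, (3:ℝ) ^ ((Nat.card (orbit A (Quotient.out ω)) : ℝ) / 3) :=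
        Finset.prod_le_prod (fun ω _ => Nat.cast_nonneg _) (fun ω _ => aux_le_rpow _)
    _ = (3:ℝ) ^ (∑ ω : Ω, (Nat.card (orbit A (Quotient.out ω)) : ℝ) / 3) :=
        (Real.rpow_sum_of_pos (by norm_num) _ _).symm
    _ = (3:ℝ) ^ ((m : ℝ) / 3) := by
        rw [← Finset.sum_div]
        congr 1
        rw [← Nat.cast_sum, hsum]
end

section
/- Let G be a finite group with Φ(G) = 1 (trivial Frattini subgroup) and O_π(G) = 1 for a set of primes π, and suppose every minimal normal subgroup of G is solvable (i.e., abelian). Then G = F(G) ⋊ A is a semidirect product where F(G) is an abelian π'-group and C_G(F(G)) = F(G). -/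
/-- The Fitting subgroup: the join of all nilpotent normal subgroups. -/
def fittingSubgroup (G : Type*) [Group G] : Subgroup G :=
  ⨆ (N : Subgroup G) (_ : N.Normal) (_ : Group.IsNilpotent N), N

/-!
Since `Φ(N) ≤ Φ(G)` for every normal subgroup `N` of a finite group, the nilpotent normal
subgroups of `G` have trivial Frattini subgroup; a nilpotent group has `[N, N] ≤ Φ(N)`, so they are
abelian. The product of two abelian normal subgroups has class at most two, hence is again
nilpotent and so abelian, which makes `F = F(G)` abelian. An abelian normal subgroup of a group
with `Φ(G) = 1` is complemented: a minimal supplement `A` of `F` meets it trivially, since a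
maximal subgroup avoiding the normal subgroup `A ⊓ F` would cut out a smaller supplement. Every
Sylow subgroup of the abelian group `F` is normal in `G`, so `O_π(G) = 1` makes `F` a
`π'`-group. Finally `C_G(F) ⊓ A` is normal in `G = F A` and disjoint from `F`; a minimal normal
subgroup inside it would be abelian, hence contained in `F`, so `C_G(F) = F`.
-/

open Subgroup

section

variable {G : Type*} [Group G]

namespace Subgroup

theorem sup_inf_assoc_of_le {A C : Subgroup G} [A.Normal] (B : Subgroup G) (h : A ≤ C) :
    (A ⊔ B) ⊓ C = A ⊔ B ⊓ C :=
  SetLike.coe_injective <| by rw [coe_inf, normal_mul, normal_mul, mul_inf_assoc _ _ _ h]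

theorem le_normalizer_inf_of_normal (H N : Subgroup G) [hN : N.Normal] :
    H ≤ normalizer (H ⊓ N : Subgroup G) :=
  le_normalizer_iff.mpr fun h hh k hk =>
    mem_inf.mpr ⟨H.mul_mem (H.mul_mem hh (mem_inf.mp hk).1) (H.inv_mem hh),
      hN.conj_mem k (mem_inf.mp hk).2 h⟩

theorem normal_of_sup_eq_top_of_le_centralizer {H F K : Subgroup G} (hHF : H ⊔ F = ⊤)
    (hH : H ≤ normalizer K) (hK : K ≤ centralizer F) : K.Normal :=
  normalizer_eq_top_iff.mp <| top_le_iff.mp <| hHF ▸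
    sup_le hH ((le_centralizer_iff.mp hK).trans (centralizer_le_normalizer _))

theorem exists_minimal_normal_le [Finite G] {K : Subgroup G} [K.Normal] (hK : K ≠ ⊥) :
    ∃ N ≤ K, N.Normal ∧ N ≠ ⊥ ∧ ∀ M : Subgroup G, M.Normal → M ≤ N → M = ⊥ ∨ M = N := by
  obtain ⟨N, hNK, hN⟩ :=
    exists_minimal_le_of_wellFoundedLT (fun N : Subgroup G => N.Normal ∧ N ≠ ⊥) K ⟨‹_›, hK⟩
  refine ⟨N, hNK, hN.prop.1, hN.prop.2, fun M hM hMN => ?_⟩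
  by_cases hMbot : M = ⊥
  · exact .inl hMbot
  · exact .inr (hN.eq_of_le ⟨hM, hMbot⟩ hMN)

end Subgroup

theorem Group.isNilpotent_of_commutator_le_center (h : commutator G ≤ center G) :
    Group.IsNilpotent G :=
  Subgroup.isNilpotent_of_ker_le_center (Abelianization.of : G →* Abelianization G)
    (Abelianization.ker_of G ▸ h)

instance (priority := 100) Group.isNilpotent_of_isMulCommutative [IsMulCommutative G] :
    Group.IsNilpotent G :=
  isNilpotent_of_commutator_le_center (commutator_eq_bot G ▸ bot_le)

/-- The commutator subgroup lies in `N ⊓ B`, which is central. -/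
theorem Group.isNilpotent_of_sup_eq_top {N B : Subgroup G} [N.Normal] [B.Normal]
    [IsMulCommutative N] [IsMulCommutative B] (h : N ⊔ B = ⊤) : Group.IsNilpotent G := by
  have hN : commutator G ≤ N :=
    Normal.commutator_le_of_self_sup_commutative_eq_top h inferInstance
  have hB : commutator G ≤ B :=
    Normal.commutator_le_of_self_sup_commutative_eq_top (sup_comm N B ▸ h) inferInstance
  have hcentral : N ⊓ B ≤ center G := by
    rw [← centralizer_univ, ← coe_top, ← h, le_centralizer_iff]
    exact sup_le (le_centralizer_iff.mp (inf_le_left.trans (le_centralizer N)))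
      (le_centralizer_iff.mp (inf_le_right.trans (le_centralizer B)))
  exact isNilpotent_of_commutator_le_center ((le_inf hN hB).trans hcentral)

theorem Subgroup.isNilpotent_sup_of_isMulCommutative (N B : Subgroup G) [N.Normal] [B.Normal]
    [IsMulCommutative N] [IsMulCommutative B] : Group.IsNilpotent (N ⊔ B : Subgroup G) :=
  Group.isNilpotent_of_sup_eq_top (N := N.subgroupOf (N ⊔ B)) (B := B.subgroupOf (N ⊔ B))
    (codisjoint_iff.mp (codisjoint_subgroupOf_sup N B))

theorem commutator_le_frattini [Group.IsNilpotent G] : commutator G ≤ frattini G := by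
  refine le_iInf₂ fun M (hM : IsCoatom M) => ?_
  have := Group.normalizerCondition_of_isNilpotent.normal_of_coatom M hM
  obtain ⟨g, -, hg⟩ := SetLike.exists_of_lt hM.lt_top
  exact Normal.commutator_le_of_self_sup_commutative_eq_top
    (hM.2 _ (left_lt_sup.mpr (zpowers_le.not.mpr hg))) inferInstance

theorem map_subtype_frattini_le [Finite G] (N : Subgroup G) [N.Normal] :
    (frattini N).map N.subtype ≤ frattini G := by
  set P := (frattini N).map N.subtype
  have hPN : P ≤ N := map_subtype_le _
  refine le_iInf₂ fun M (hM : IsCoatom M) => by_contra fun hPM => hPM ?_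
  have hPM_top : P ⊔ M = ⊤ := hM.2 _ (right_lt_sup.mpr hPM)
  have hgen : M.subgroupOf N ⊔ frattini N = ⊤ := by
    apply map_injective N.subtype_injective
    rw [Subgroup.map_sup, subgroupOf_map_subtype, ← MonoidHom.range_eq_map, range_subtype,
      sup_comm, ← sup_inf_assoc_of_le M hPN, hPM_top, top_inf_eq]
  exact hPN.trans (subgroupOf_eq_top.mp (frattini_nongenerating hgen))

theorem isMulCommutative_of_frattini_eq_bot [Finite G] (hΦ : frattini G = ⊥) (N : Subgroup G)
    [N.Normal] [Group.IsNilpotent N] : IsMulCommutative N := by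
  have hΦN : frattini N = ⊥ :=
    (map_eq_bot_iff_of_injective _ N.subtype_injective).mp
      (le_bot_iff.mp (hΦ ▸ map_subtype_frattini_le N))
  exact (commutator_eq_bot_iff N).mp (le_bot_iff.mp (hΦN ▸ commutator_le_frattini))

theorem fittingSubgroup_eq_sSup :
    fittingSubgroup G = sSup {N : Subgroup G | N.Normal ∧ Group.IsNilpotent N} := by
  simp only [fittingSubgroup, sSup_eq_iSup, Set.mem_ofPred_eq, iSup_and]

instance fittingSubgroup_normal : (fittingSubgroup G).Normal :=
  fittingSubgroup_eq_sSup (G := G) ▸ sSup_normal _ fun _ hN => hN.1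

theorem le_fittingSubgroup (N : Subgroup G) [hN : N.Normal] [hN' : Group.IsNilpotent N] :
    N ≤ fittingSubgroup G :=
  fittingSubgroup_eq_sSup (G := G) ▸ le_sSup ⟨hN, hN'⟩

theorem fittingSubgroup_le_iff {H : Subgroup G} :
    fittingSubgroup G ≤ H ↔ ∀ N : Subgroup G, N.Normal → Group.IsNilpotent N → N ≤ H := by
  simp only [fittingSubgroup_eq_sSup, sSup_le_iff, Set.mem_ofPred_eq, and_imp]

theorem isMulCommutative_fittingSubgroup [Finite G] (hΦ : frattini G = ⊥) :
    IsMulCommutative (fittingSubgroup G) := by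
  refine le_centralizer_iff_isMulCommutative.mp <| fittingSubgroup_le_iff.mpr fun N _ _ =>
    le_centralizer_iff.mp <| fittingSubgroup_le_iff.mpr fun B _ _ => ?_
  have := isMulCommutative_of_frattini_eq_bot hΦ N
  have := isMulCommutative_of_frattini_eq_bot hΦ B
  have := N.isNilpotent_sup_of_isMulCommutative B
  have := isMulCommutative_of_frattini_eq_bot hΦ (N ⊔ B)
  exact fun b hb => mem_centralizer_iff.mpr fun n hn =>
    setLike_mul_comm (s := N ⊔ B) (mem_sup_left hn) (mem_sup_right hb)

theorem exists_isComplement'_of_frattini_eq_bot [Finite G] (hΦ : frattini G = ⊥)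
    (F : Subgroup G) [F.Normal] [IsMulCommutative F] : ∃ A : Subgroup G, F.IsComplement' A := by
  obtain ⟨H, -, hH⟩ :=
    exists_minimal_le_of_wellFoundedLT (fun H : Subgroup G => H ⊔ F = ⊤) ⊤ (top_sup_eq F)
  refine ⟨H, isComplement'_of_disjoint_and_mul_eq_univ (disjoint_iff.mpr ?_) ?_⟩
  · rw [inf_comm]
    by_contra hK
    have : (H ⊓ F).Normal := normal_of_sup_eq_top_of_le_centralizer hH.prop
      (le_normalizer_inf_of_normal H F) (inf_le_right.trans (le_centralizer F))
    obtain ⟨M, hM, hKM⟩ : ∃ M : Subgroup G, IsCoatom M ∧ ¬ H ⊓ F ≤ M := by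
      by_contra! h
      exact hK (le_bot_iff.mp (hΦ ▸ le_iInf₂ h))
    have hH_eq : H ⊓ F ⊔ M ⊓ H = H := by
      rw [← sup_inf_assoc_of_le M inf_le_left, hM.2 _ (right_lt_sup.mpr hKM), top_inf_eq]
    have hMH : M ⊓ H ⊔ F = ⊤ := top_le_iff.mp <| calc
      ⊤ = H ⊓ F ⊔ M ⊓ H ⊔ F := by rw [hH_eq, hH.prop]
      _ ≤ M ⊓ H ⊔ F := sup_le (sup_le (inf_le_right.trans le_sup_right) le_sup_left) le_sup_right
    exact hKM (inf_le_left.trans ((hH.le_of_le hMH inf_le_right).trans inf_le_left))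
  · rw [← normal_mul, sup_comm, hH.prop, coe_top]

theorem Subgroup.IsComplement'.centralizer_eq_self {F A : Subgroup G} [F.Normal]
    [IsMulCommutative F] (hFA : F.IsComplement' A)
    (hF : ∀ K : Subgroup G, K.Normal → Disjoint K F → K = ⊥) : centralizer (F : Set G) = F := by
  have hnormal : (centralizer (F : Set G) ⊓ A).Normal :=
    normal_of_sup_eq_top_of_le_centralizer (sup_comm F A ▸ hFA.sup_eq_top)
      (inf_comm A _ ▸ le_normalizer_inf_of_normal A _) inf_le_left
  have hbot := hF _ hnormal (hFA.disjoint.symm.mono_left inf_le_right)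
  calc centralizer (F : Set G) = (F ⊔ A) ⊓ centralizer F := by
        rw [hFA.sup_eq_top, top_inf_eq]
    _ = F ⊔ A ⊓ centralizer F := sup_inf_assoc_of_le A (le_centralizer F)
    _ = F := by rw [inf_comm, hbot, sup_bot_eq]

theorem eq_bot_of_disjoint_fittingSubgroup [Finite G]
    (hminab : ∀ N : Subgroup G, N.Normal → N ≠ ⊥ →
      (∀ M : Subgroup G, M.Normal → M ≤ N → M = ⊥ ∨ M = N) →
      ∀ x ∈ N, ∀ y ∈ N, x * y = y * x)
    (K : Subgroup G) [K.Normal] (hK : Disjoint K (fittingSubgroup G)) : K = ⊥ := by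
  by_contra hK'
  obtain ⟨N, hNK, hN, hNbot, hNmin⟩ := exists_minimal_normal_le hK'
  have := IsMulCommutative.of_setLike_mul_comm (hminab N hN hNbot hNmin)
  exact hNbot (le_bot_iff.mp (hK hNK (le_fittingSubgroup N)))

theorem Subgroup.notMem_of_prime_dvd_card [Finite G] {π : Set ℕ}
    (hOπ : ∀ N : Subgroup G, N.Normal →
      (∀ q : ℕ, q.Prime → q ∣ Nat.card N → q ∈ π) → N = ⊥)
    (F : Subgroup G) [F.Normal] [IsMulCommutative F] {q : ℕ} (hq : q.Prime)
    (hqF : q ∣ Nat.card F) : q ∉ π := by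
  intro hqπ
  have := Fact.mk hq
  obtain ⟨P⟩ : Nonempty (Sylow q F) := inferInstance
  have := P.characteristic_of_normal inferInstance
  obtain ⟨n, hn⟩ := P.isPGroup'.exists_card_eq
  refine P.ne_bot_of_dvd_card hqF ((map_eq_bot_iff_of_injective _ F.subtype_injective).mp
    (hOπ _ inferInstance fun r hr hrP => ?_))
  rw [card_map_of_injective F.subtype_injective, hn] at hrP
  exact (Nat.prime_dvd_prime_iff_eq hr hq).mp (hr.dvd_of_dvd_pow hrP) ▸ hqπ

end

theorem fitting_self_centralizing_of_frattini_trivial_general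
    (G : Type*) [Group G] [Finite G] (π : Set ℕ)
    (hfrattini : frattini G = ⊥)
    (hOπ : ∀ N : Subgroup G, N.Normal →
      (∀ q : ℕ, q.Prime → q ∣ Nat.card N → q ∈ π) → N = ⊥)
    (hminab : ∀ N : Subgroup G, N.Normal → N ≠ ⊥ →
      (∀ M : Subgroup G, M.Normal → M ≤ N → M = ⊥ ∨ M = N) →
      ∀ x ∈ N, ∀ y ∈ N, x * y = y * x) :
    (∀ x ∈ fittingSubgroup G, ∀ y ∈ fittingSubgroup G, x * y = y * x) ∧
    (∀ q : ℕ, q.Prime → q ∣ Nat.card (fittingSubgroup G) → q ∉ π) ∧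
    Subgroup.centralizer (fittingSubgroup G : Set G) = fittingSubgroup G ∧
    ∃ A : Subgroup G, Subgroup.IsComplement' (fittingSubgroup G) A := by
  have := isMulCommutative_fittingSubgroup hfrattini
  obtain ⟨A, hA⟩ := exists_isComplement'_of_frattini_eq_bot hfrattini (fittingSubgroup G)
  exact ⟨fun x hx y hy => setLike_mul_comm hx hy,
    fun q hq hqF => notMem_of_prime_dvd_card hOπ _ hq hqF,
    hA.centralizer_eq_self fun K _ hK => eq_bot_of_disjoint_fittingSubgroup hminab K hK,
    A, hA⟩

/-- If `G` is finite with trivial Frattini subgroup and trivial `O_π(G)`, and every minimal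
normal subgroup of `G` is abelian, then the Fitting subgroup `F(G)` is an abelian `π'`-group
which is self-centralizing, and `G` splits as `F(G) ⋊ A` over it. -/
theorem fitting_self_centralizing_of_frattini_trivial
    (G : Type*) [Group G] [Finite G] (π : Set ℕ) (hπ : ∀ q ∈ π, Nat.Prime q)
    (hfrattini : frattini G = ⊥)
    (hOπ : ∀ N : Subgroup G, N.Normal →
      (∀ q : ℕ, q.Prime → q ∣ Nat.card N → q ∈ π) → N = ⊥)
    (hminab : ∀ N : Subgroup G, N.Normal → N ≠ ⊥ →
      (∀ M : Subgroup G, M.Normal → M ≤ N → M = ⊥ ∨ M = N) →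
      ∀ x ∈ N, ∀ y ∈ N, x * y = y * x) :
    (∀ x ∈ fittingSubgroup G, ∀ y ∈ fittingSubgroup G, x * y = y * x) ∧
    (∀ q : ℕ, q.Prime → q ∣ Nat.card (fittingSubgroup G) → q ∉ π) ∧
    Subgroup.centralizer (fittingSubgroup G : Set G) = fittingSubgroup G ∧
    ∃ A : Subgroup G, Subgroup.IsComplement' (fittingSubgroup G) A :=
  fitting_self_centralizing_of_frattini_trivial_general G π hfrattini hOπ hminab
end

section
/- For positive integers a_1,...,a_t and k_1,...,k_t with Σ a_i·k_i = n and n ≥ 3, if not (t = 1 and (a_1,k_1) = (n,1)), then Σ k_i·(a_i(a_i-1)/2 + 1) ≤ (n-1)(n-2)/2 + 2. -/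
/-- Superadditivity-type lemma: for `k i ≥ 1`,
`Σ k i * (e i + 1) * e i ≤ (D + 1) * D` where `D = Σ k i * e i`. -/
theorem aux_sum_sq {ι : Type*} (s : Finset ι) (k e : ι → ℕ)
    (hk : ∀ i ∈ s, 1 ≤ k i) :
    ∑ i ∈ s, k i * ((e i + 1) * e i) ≤
      (∑ i ∈ s, k i * e i + 1) * (∑ i ∈ s, k i * e i) := by
  induction s using Finset.cons_induction with
  | empty => simp
  | cons i s his ih =>
    simp only [Finset.sum_cons]
    have hki : 1 ≤ k i := hk i (Finset.mem_cons_self i s)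
    have IH := ih (fun j hj => hk j (Finset.mem_cons_of_mem hj))
    set c := k i with hc
    set b := e i with hb
    set X := ∑ j ∈ s, k j * e j with hX
    have h1 : b ≤ c * b := Nat.le_mul_of_pos_left b hki
    nlinarith [IH, h1, Nat.mul_le_mul_left c h1]

/-- For positive integers `a_i`, `k_i` with `Σ a_i k_i = n ≥ 3`, excluding the single case
`t = 1, (a_1, k_1) = (n, 1)`, one has `Σ k_i (a_i(a_i-1)/2 + 1) ≤ (n-1)(n-2)/2 + 2`. -/
theorem sum_k_mul_le (t n : ℕ) (ht : 1 ≤ t) (hn : 3 ≤ n)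
    (a k : Fin t → ℕ) (ha : ∀ i, 1 ≤ a i) (hk : ∀ i, 1 ≤ k i)
    (hsum : ∑ i, a i * k i = n)
    (hexc : ¬ (t = 1 ∧ ∀ i, a i = n ∧ k i = 1)) :
    ∑ i, k i * (a i * (a i - 1) / 2 + 1) ≤ (n - 1) * (n - 2) / 2 + 2 := by
  set e : Fin t → ℕ := fun i => a i - 1 with he
  have hae : ∀ i, a i = e i + 1 := fun i => by have := ha i; simp [he]; omega
  set D := ∑ i, k i * e i with hD
  set m := ∑ i, k i with hm
  -- n = D + m
  have hnDm : n = D + m := by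
    rw [← hsum, hD, hm, ← Finset.sum_add_distrib]
    apply Finset.sum_congr rfl
    intro i _
    rw [hae i]; ring
  -- m ≥ 2
  have htm : t ≤ m := by
    calc t = ∑ _i : Fin t, 1 := by simp
    _ ≤ m := Finset.sum_le_sum (fun i _ => hk i)
  have hm2 : 2 ≤ m := by
    by_contra hlt
    have hm1 : m = 1 := by omega
    have ht1 : t = 1 := by omega
    subst ht1
    apply hexc
    refine ⟨rfl, fun i => ?_⟩
    have hi0 : i = 0 := Subsingleton.elim i 0
    subst hi0
    have hk0 : k 0 = 1 := by
      have := hm; simp [Fin.sum_univ_one] at this; omega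
    have ha0 : a 0 = n := by
      have := hsum; simp [Fin.sum_univ_one, hk0] at this; omega
    exact ⟨ha0, hk0⟩
  -- key inequality times 2, avoiding division
  have key : ∑ i, k i * ((e i + 1) * e i) ≤ (D + 1) * D :=
    aux_sum_sq Finset.univ k e (fun i _ => hk i)
  have hdiv : ∀ x : ℕ, 2 * ((x + 1) * x / 2 + 1) = (x + 1) * x + 2 := by
    intro x
    have hev : Even ((x + 1) * x) := by
      rw [mul_comm]; exact Nat.even_mul_succ_self x
    obtain ⟨c, hc⟩ := hev
    omega
  -- rewrite LHS terms
  have hterm : ∀ i : Fin t, k i * (a i * (a i - 1) / 2 + 1)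
      = k i * ((e i + 1) * e i / 2 + 1) := by
    intro i
    rw [hae i]
    simp
  have hLHS2 : 2 * ∑ i, k i * (a i * (a i - 1) / 2 + 1)
      = ∑ i, k i * ((e i + 1) * e i) + 2 * m := by
    rw [Finset.sum_congr rfl (fun i _ => hterm i), Finset.mul_sum]
    rw [hm, Finset.mul_sum, ← Finset.sum_add_distrib]
    apply Finset.sum_congr rfl
    intro i _
    calc 2 * (k i * ((e i + 1) * e i / 2 + 1))
        = k i * (2 * ((e i + 1) * e i / 2 + 1)) := by ring
      _ = k i * ((e i + 1) * e i + 2) := by rw [hdiv]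
      _ = k i * ((e i + 1) * e i) + 2 * k i := by ring
  -- RHS times 2
  have hevR : Even ((n - 1) * (n - 2)) := by
    have h12 : n - 1 = (n - 2) + 1 := by omega
    rw [h12, mul_comm]
    exact Nat.even_mul_succ_self (n - 2)
  obtain ⟨r, hr⟩ := hevR
  -- main numeric inequality
  obtain ⟨d, hd⟩ : ∃ d, m = d + 2 := ⟨m - 2, by omega⟩
  have hn1 : n - 1 = D + d + 1 := by omega
  have hn2 : n - 2 = D + d := by omega
  have hfin : (D + 1) * D + 2 * m ≤ (n - 1) * (n - 2) + 4 := by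
    rw [hn1, hn2, hd]
    have hdd : d ≤ d * d := by
      rcases Nat.eq_zero_or_pos d with h | h
      · simp [h]
      · exact Nat.le_mul_of_pos_left d h
    nlinarith [hdd]
  have h2 : 2 * ∑ i, k i * (a i * (a i - 1) / 2 + 1)
      ≤ 2 * ((n - 1) * (n - 2) / 2 + 2) := by
    rw [hLHS2]
    have : 2 * ((n - 1) * (n - 2) / 2 + 2) = (n - 1) * (n - 2) + 4 := by omega
    rw [this]
    calc ∑ i, k i * ((e i + 1) * e i) + 2 * m ≤ (D + 1) * D + 2 * m := by omega
      _ ≤ (n - 1) * (n - 2) + 4 := hfin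
  omega
end
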